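/- For a > 1 and b < 0, the third derivative of the Melnikov function satisfies M‴(h) < 0 for every h with 0 < h < (a² - 1)/2. -/

import Mathlib

/-!
Each derivative of `Mel a b` has the shape `E(h) + F(a + 1, h) - F(a - 1, h)`, with `E`
elementary in `√(2h)` and `F(c, ·)` built on `arctan (√(2h) / c)`. Since
`d/dh arctan (√(2h) / c) = c / ((c² + 2h) √(2h))`, the third derivative is algebraic, and once the
`-3c` terms of `F` cancel against `E` it reads
  `M‴(h) = (16 h² (φ(a+1) - φ(a-1)) - 2 b (ψ(a+1) - ψ(a-1))) / (2h)^(3/2)`,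
where `φ(c) = c / (c² + 2h)²` and `ψ(c) = c (c² + 6h) / (c² + 2h)²`. For `2h ≤ (a-1)(a+1)` both
`φ` and `ψ` are smaller at `q = a + 1` than at `p = a - 1`: after clearing denominators the
differences factor as `q - p` times a sum of nonnegative terms. With `b < 0` both summands are negative.
-/

/-- The Melnikov function `M(h; a, b)` of the discontinuous SD oscillator. -/
noncomputable def Mel (a b h : ℝ) : ℝ :=
  -(Real.pi / 4) * (a + 1) ^ 2 * (5 * a ^ 2 + 10 * a + 4 * b + 5)
    - (15 * a ^ 2 + 4 * b + 5) * Real.sqrt h / Real.sqrt 2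
    - (3 * a ^ 2 + 6 * a + 2 * b + 3) * Real.pi * h
    - (13 * Real.sqrt 2 / 3) * (h * Real.sqrt h)
    - Real.pi * h ^ 2
    - (1 / 4) * (a ^ 2 - 2 * a + 2 * h + 1) * (5 * a ^ 2 - 10 * a + 4 * b + 2 * h + 5)
        * Real.arctan (Real.sqrt (2 * h) / (a - 1))
    + (1 / 4) * (a ^ 2 + 2 * a + 2 * h + 1) * (5 * a ^ 2 + 10 * a + 4 * b + 2 * h + 5)
        * Real.arctan (Real.sqrt (2 * h) / (a + 1))

open Real

theorem deriv_deriv_deriv_eq_of_hasDerivAt {f f₁ f₂ : ℝ → ℝ} {f₃ x : ℝ} {U : Set ℝ}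
    (hU : IsOpen U) (hx : x ∈ U) (h₁ : ∀ y ∈ U, HasDerivAt f (f₁ y) y)
    (h₂ : ∀ y ∈ U, HasDerivAt f₁ (f₂ y) y) (h₃ : HasDerivAt f₂ f₃ x) :
    deriv (deriv (deriv f)) x = f₃ := by
  have hf₂ : ∀ y ∈ U, deriv (deriv f) y = f₂ y := fun y hy => by
    rw [(Filter.eventuallyEq_of_mem (hU.mem_nhds hy) fun z hz => (h₁ z hz).deriv).deriv_eq]
    exact (h₂ y hy).deriv
  rw [(Filter.eventuallyEq_of_mem (hU.mem_nhds hx) hf₂).deriv_eq, h₃.deriv]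

theorem div_sq_add_sq_lt {p q t : ℝ} (hp : 0 < p) (hpq : p < q) (ht : 0 ≤ t)
    (htpq : t ≤ p * q) : q / (q ^ 2 + t) ^ 2 < p / (p ^ 2 + t) ^ 2 := by
  have hq : 0 < q := hp.trans hpq
  have hm : 0 < p * q := mul_pos hp hq
  rw [div_lt_div_iff₀ (by positivity) (by positivity), ← sub_pos]
  calc 0 < (q - p) * (p * q * (p ^ 2 + p * q + q ^ 2) + t * (2 * (p * q) - t)) := by
        refine mul_pos (sub_pos.2 hpq) (add_pos_of_pos_of_nonneg (by positivity) ?_)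
        exact mul_nonneg ht (by linarith)
    _ = p * (q ^ 2 + t) ^ 2 - q * (p ^ 2 + t) ^ 2 := by ring

theorem mul_sq_add_three_mul_div_sq_add_sq_lt {p q t : ℝ} (hp : 0 < p) (hpq : p < q)
    (ht : 0 ≤ t) (htpq : t ≤ p * q) :
    q * (q ^ 2 + 3 * t) / (q ^ 2 + t) ^ 2 < p * (p ^ 2 + 3 * t) / (p ^ 2 + t) ^ 2 := by
  have hq : 0 < q := hp.trans hpq
  have hm : 0 < p * q := mul_pos hp hq
  rw [div_lt_div_iff₀ (by positivity) (by positivity), ← sub_pos]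
  calc 0 < (q - p) * ((p * q) ^ 3 + 7 * (p * q) ^ 2 * t + 3 * t ^ 2 * (p * q - t)
          + t * (3 * (p * q) - t) * (q - p) ^ 2) := by
        refine mul_pos (sub_pos.2 hpq) ?_
        have := mul_nonneg (sq_nonneg t) (sub_nonneg.2 htpq)
        have := mul_nonneg (mul_nonneg ht (by linarith : 0 ≤ 3 * (p * q) - t)) (sq_nonneg (q - p))
        linarith [pow_pos hm 3, mul_nonneg (sq_nonneg (p * q)) ht]
    _ = p * (p ^ 2 + 3 * t) * (q ^ 2 + t) ^ 2 - q * (q ^ 2 + 3 * t) * (p ^ 2 + t) ^ 2 := by ring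

theorem hasDerivAt_sqrt_two_mul {x : ℝ} (hx : 0 < x) :
    HasDerivAt (fun y => √(2 * y)) (√(2 * x))⁻¹ x := by
  convert ((hasDerivAt_id' x).const_mul 2).sqrt (by positivity) using 1
  have : 0 < √(2 * x) := by positivity
  field_simp

theorem hasDerivAt_arctan_sqrt_two_mul_div {c x : ℝ} (hc : c ≠ 0) (hx : 0 < x) :
    HasDerivAt (fun y => arctan (√(2 * y) / c)) (c / ((c ^ 2 + 2 * x) * √(2 * x))) x := by
  convert ((hasDerivAt_sqrt_two_mul hx).div_const c).arctan using 1
  have : 0 < √(2 * x) := by positivity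
  rw [div_pow, sq_sqrt (by positivity)]
  field_simp

/-- The `F` of `Mel`; `arctanPart₁`, `arctanPart₂`, `arctanPart₃` are those of `M′`, `M″`, `M‴`. -/
noncomputable def arctanPart (b c h : ℝ) : ℝ :=
  (c ^ 2 + 2 * h) * (5 * c ^ 2 + 4 * b + 2 * h) / 4 * arctan (√(2 * h) / c)

noncomputable def arctanPart₁ (b c h : ℝ) : ℝ :=
  (3 * c ^ 2 + 2 * b + 2 * h) * arctan (√(2 * h) / c)

noncomputable def arctanPart₂ (b c h : ℝ) : ℝ :=
  2 * arctan (√(2 * h) / c) + c * (3 * c ^ 2 + 2 * b + 2 * h) / ((c ^ 2 + 2 * h) * √(2 * h))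

noncomputable def arctanPart₃ (b c h : ℝ) : ℝ :=
  (c * (16 * h ^ 2 - 2 * b * (c ^ 2 + 6 * h)) / (c ^ 2 + 2 * h) ^ 2 - 3 * c) / √(2 * h) ^ 3

section

variable {b c h : ℝ}

theorem hasDerivAt_arctanPart (hc : c ≠ 0) (hh : 0 < h) :
    HasDerivAt (arctanPart b c)
      (arctanPart₁ b c h + c * (5 * c ^ 2 + 4 * b + 2 * h) / (4 * √(2 * h))) h := by
  have hpoly : HasDerivAt (fun y => (c ^ 2 + 2 * y) * (5 * c ^ 2 + 4 * b + 2 * y) / 4)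
      (3 * c ^ 2 + 2 * b + 2 * h) h := by
    refine ((((hasDerivAt_id' h).const_mul 2).const_add (c ^ 2)).mul
      (((hasDerivAt_id' h).const_mul 2).const_add (5 * c ^ 2 + 4 * b))).div_const 4
      |>.congr_deriv ?_
    ring
  refine (hpoly.mul (hasDerivAt_arctan_sqrt_two_mul_div hc hh)).congr_deriv ?_
  have : 0 < √(2 * h) := by positivity
  unfold arctanPart₁
  field_simp

theorem hasDerivAt_arctanPart₁ (hc : c ≠ 0) (hh : 0 < h) :
    HasDerivAt (arctanPart₁ b c) (arctanPart₂ b c h) h := by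
  refine ((((hasDerivAt_id' h).const_mul 2).const_add (3 * c ^ 2 + 2 * b)).mul
    (hasDerivAt_arctan_sqrt_two_mul_div hc hh)).congr_deriv ?_
  unfold arctanPart₂
  ring

theorem hasDerivAt_arctanPart₂ (hc : c ≠ 0) (hh : 0 < h) :
    HasDerivAt (arctanPart₂ b c) (arctanPart₃ b c h) h := by
  have hs : 0 < √(2 * h) := by positivity
  have hsq : √(2 * h) ^ 2 = 2 * h := sq_sqrt (by positivity)
  have hnum := (((hasDerivAt_id' h).const_mul 2).const_add (3 * c ^ 2 + 2 * b)).const_mul c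
  have hden : HasDerivAt (fun y => (c ^ 2 + 2 * y) * √(2 * y)) _ h :=
    (((hasDerivAt_id' h).const_mul 2).const_add (c ^ 2)).mul (hasDerivAt_sqrt_two_mul hh)
  refine (((hasDerivAt_arctan_sqrt_two_mul_div hc hh).const_mul 2).add
    (hnum.div hden (by positivity))).congr_deriv ?_
  unfold arctanPart₃
  field_simp
  linear_combination (4 * h - 2 * c ^ 2 - 4 * b) * hsq

theorem Mel_eq_arctanPart (a b : ℝ) :
    Mel a b = fun h => -(π / 4) * (a + 1) ^ 2 * (5 * a ^ 2 + 10 * a + 4 * b + 5)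
      - (15 * a ^ 2 + 4 * b + 5) / 2 * √(2 * h) - (3 * a ^ 2 + 6 * a + 2 * b + 3) * π * h
      - 13 / 3 * (h * √(2 * h)) - π * h ^ 2 + arctanPart b (a + 1) h - arctanPart b (a - 1) h := by
  ext h
  have h2 : √2 ^ 2 = 2 := sq_sqrt zero_le_two
  simp only [Mel, arctanPart, sqrt_mul zero_le_two h]
  field_simp
  linear_combination (180 * a ^ 2 + 48 * b + 60) * √h * h2

noncomputable def melDeriv₁ (a b h : ℝ) : ℝ :=
  -((3 * a ^ 2 + 6 * a + 2 * b + 3) * π) - 6 * √(2 * h) - 2 * π * h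
    + arctanPart₁ b (a + 1) h - arctanPart₁ b (a - 1) h

noncomputable def melDeriv₂ (a b h : ℝ) : ℝ :=
  -6 / √(2 * h) - 2 * π + arctanPart₂ b (a + 1) h - arctanPart₂ b (a - 1) h

noncomputable def melDeriv₃ (a b h : ℝ) : ℝ :=
  6 / √(2 * h) ^ 3 + arctanPart₃ b (a + 1) h - arctanPart₃ b (a - 1) h

variable {a : ℝ}

theorem hasDerivAt_Mel (ha₁ : a - 1 ≠ 0) (ha₂ : a + 1 ≠ 0) (hh : 0 < h) :
    HasDerivAt (Mel a b) (melDeriv₁ a b h) h := by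
  rw [Mel_eq_arctanPart]
  have hsqrt := hasDerivAt_sqrt_two_mul hh
  refine (((((((hasDerivAt_const h _).sub (hsqrt.const_mul _)).sub
    ((hasDerivAt_id' h).const_mul _)).sub (((hasDerivAt_id' h).mul hsqrt).const_mul (13 / 3))).sub
    ((hasDerivAt_pow 2 h).const_mul π)).add (hasDerivAt_arctanPart ha₂ hh)).sub
    (hasDerivAt_arctanPart ha₁ hh)).congr_deriv ?_
  have hs : 0 < √(2 * h) := by positivity
  have hsq : √(2 * h) ^ 2 = 2 * h := sq_sqrt (by positivity)
  unfold melDeriv₁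
  field_simp
  linear_combination 40 * hsq

theorem hasDerivAt_melDeriv₁ (ha₁ : a - 1 ≠ 0) (ha₂ : a + 1 ≠ 0) (hh : 0 < h) :
    HasDerivAt (melDeriv₁ a b) (melDeriv₂ a b h) h := by
  refine (((((hasDerivAt_const h _).sub ((hasDerivAt_sqrt_two_mul hh).const_mul 6)).sub
    ((hasDerivAt_id' h).const_mul (2 * π))).add (hasDerivAt_arctanPart₁ ha₂ hh)).sub
    (hasDerivAt_arctanPart₁ ha₁ hh)).congr_deriv ?_
  unfold melDeriv₂
  ring

theorem hasDerivAt_melDeriv₂ (ha₁ : a - 1 ≠ 0) (ha₂ : a + 1 ≠ 0) (hh : 0 < h) :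
    HasDerivAt (melDeriv₂ a b) (melDeriv₃ a b h) h := by
  have hs : 0 < √(2 * h) := by positivity
  refine (((((hasDerivAt_const h (-6)).div (hasDerivAt_sqrt_two_mul hh) hs.ne').sub
    (hasDerivAt_const h _)).add (hasDerivAt_arctanPart₂ ha₂ hh)).sub
    (hasDerivAt_arctanPart₂ ha₁ hh)).congr_deriv ?_
  unfold melDeriv₃
  field_simp
  ring

theorem melDeriv₃_neg (ha : 1 < a) (hb : b < 0) (hh : 0 < h) (hlt : h < (a ^ 2 - 1) / 2) :
    melDeriv₃ a b h < 0 := by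
  have hp : 0 < a - 1 := by linarith
  have hpq : a - 1 < a + 1 := by linarith
  have ht : 2 * h ≤ (a - 1) * (a + 1) := by nlinarith
  have hφ := div_sq_add_sq_lt hp hpq (by positivity) ht
  have hψ := mul_sq_add_three_mul_div_sq_add_sq_lt hp hpq (by positivity) ht
  have hsplit : melDeriv₃ a b h =
      (16 * h ^ 2 * ((a + 1) / ((a + 1) ^ 2 + 2 * h) ^ 2 - (a - 1) / ((a - 1) ^ 2 + 2 * h) ^ 2)
        - 2 * b * ((a + 1) * ((a + 1) ^ 2 + 3 * (2 * h)) / ((a + 1) ^ 2 + 2 * h) ^ 2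
          - (a - 1) * ((a - 1) ^ 2 + 3 * (2 * h)) / ((a - 1) ^ 2 + 2 * h) ^ 2)) / √(2 * h) ^ 3 := by
    simp only [melDeriv₃, arctanPart₃]
    ring
  rw [hsplit]
  refine div_neg_of_neg_of_pos ?_ (by positivity)
  have := mul_neg_of_pos_of_neg (by positivity : 0 < 16 * h ^ 2) (sub_neg.2 hφ)
  have := mul_pos_of_neg_of_neg hb (sub_neg.2 hψ)
  linarith

end

/-- For `a > 1` and `b < 0`, `M'''(h) < 0` for every `0 < h < (a² - 1)/2`. -/
theorem melnikov_third_deriv_neg (a b : ℝ) (ha : 1 < a) (hb : b < 0) :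
    ∀ h : ℝ, 0 < h → h < (a ^ 2 - 1) / 2 →
      deriv (deriv (deriv (Mel a b))) h < 0 := by
  intro h hh hlt
  have ha₁ : a - 1 ≠ 0 := by linarith
  have ha₂ : a + 1 ≠ 0 := by linarith
  rw [deriv_deriv_deriv_eq_of_hasDerivAt isOpen_Ioi (Set.mem_Ioi.2 hh)
    (fun y hy => hasDerivAt_Mel ha₁ ha₂ hy) (fun y hy => hasDerivAt_melDeriv₁ ha₁ ha₂ hy)
    (hasDerivAt_melDeriv₂ ha₁ ha₂ hh)]
  exact melDeriv₃_neg ha hb hh hlt
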